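/- Let a be real with |a| > 2. Then for all sufficiently large n, the trinomial x^n - a x - 1 has exactly one root inside the open unit disk, and the Mahler measure M(x^n - a x - 1) tends to |a| as n → ∞. -/

import Mathlib

/-!
A root `z` of `xⁿ - a x - 1` in the closed unit disk satisfies `|a| |z| ≤ |z|ⁿ + 1 ≤ 2`, so it lies
in the disk of radius `r = 2 / |a| < 1`, and the intermediate value theorem provides a real root
there. Dividing by `x - z` leaves the factor `∑ xⁱ z^(n-1-i) - a`, which cannot vanish on that disk
once `n r^(n-1) < |a|`; hence `z` is the only root in the unit disk, counted with multiplicity.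
By Vieta the roots have product of modulus one, so `M = 1 / |z|`, and
`|1 / |z| - |a|| ≤ |a z + 1| / |z| = |z|^(n-1) ≤ r^(n-1) → 0`.
-/

open Filter Polynomial
open scoped Classical

theorem norm_geom_sum₂_le {R : Type*} [NormedRing R] [NormOneClass R] {x y : R} {r : ℝ}
    (hx : ‖x‖ ≤ r) (hy : ‖y‖ ≤ r) (n : ℕ) :
    ‖∑ i ∈ Finset.range n, x ^ i * y ^ (n - 1 - i)‖ ≤ n * r ^ (n - 1) := by
  have hr : 0 ≤ r := (norm_nonneg x).trans hx
  have hterm (i : ℕ) (hi : i ∈ Finset.range n) : ‖x ^ i * y ^ (n - 1 - i)‖ ≤ r ^ (n - 1) :=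
    calc ‖x ^ i * y ^ (n - 1 - i)‖ ≤ ‖x‖ ^ i * ‖y‖ ^ (n - 1 - i) :=
          (norm_mul_le _ _).trans (by gcongr <;> exact norm_pow_le _ _)
      _ ≤ r ^ i * r ^ (n - 1 - i) := by gcongr
      _ = r ^ (n - 1) := by rw [← pow_add, Nat.add_sub_cancel' (by simp at hi; omega)]
  simpa using (norm_sum_le _ _).trans (Finset.sum_le_sum hterm)

theorem Polynomial.Monic.prod_max_norm_one_mul_prod_norm_lt_one {p : ℂ[X]} (hp : p.Monic) :
    (p.roots.map fun z => max ‖z‖ 1).prod * ((p.roots.filter (‖·‖ < 1)).map (‖·‖)).prod =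
      ‖p.coeff 0‖ := by
  have hin : (p.roots.filter (‖·‖ < 1)).map (fun z => min ‖z‖ 1) =
      (p.roots.filter (‖·‖ < 1)).map (‖·‖) :=
    Multiset.map_congr rfl fun z hz => min_eq_left (Multiset.mem_filter.mp hz).2.le
  have hout : ((p.roots.filter (¬ ‖·‖ < 1)).map fun z => min ‖z‖ 1).prod = 1 :=
    Multiset.prod_eq_one fun x hx => by
      obtain ⟨z, hz, rfl⟩ := Multiset.mem_map.mp hx
      exact min_eq_right (not_lt.mp (Multiset.mem_filter.mp hz).2)
  have hmin : ((p.roots.filter (‖·‖ < 1)).map (‖·‖)).prod =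
      (p.roots.map fun z => min ‖z‖ 1).prod := by
    conv_rhs => rw [← Multiset.filter_add_not (‖·‖ < 1) p.roots]
    rw [Multiset.map_add, Multiset.prod_add, hin, hout, mul_one]
  have hvieta : ‖p.coeff 0‖ = (p.roots.map (‖·‖)).prod := by
    rw [(IsAlgClosed.splits p).coeff_zero_eq_prod_roots_of_monic hp]
    simpa using map_multiset_prod (normHom : ℂ →*₀ ℝ) p.roots
  rw [hmin, hvieta, ← Multiset.prod_map_mul]
  simp [max_mul_min]

theorem tendsto_natCast_mul_pow_sub_one {r : ℝ} (hr0 : 0 ≤ r) (hr1 : r < 1) :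
    Tendsto (fun n : ℕ => n * r ^ (n - 1)) atTop (nhds 0) := by
  rw [← tendsto_add_atTop_iff_nat 1]
  simpa [add_mul] using (tendsto_self_mul_const_pow_of_lt_one hr0 hr1).add
    (tendsto_pow_atTop_nhds_zero_of_lt_one hr0 hr1)

section NormedField

variable {𝕜 : Type*} [NormedField 𝕜] {n : ℕ} {a z : 𝕜}

theorem norm_mul_norm_le_two_of_pow_eq_mul_add_one (hz : z ^ n = a * z + 1) (hz1 : ‖z‖ ≤ 1) :
    ‖a‖ * ‖z‖ ≤ 2 :=
  calc ‖a‖ * ‖z‖ = ‖z ^ n - 1‖ := by rw [hz, add_sub_cancel_right, norm_mul]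
    _ ≤ ‖z‖ ^ n + 1 := by simpa using norm_sub_le (z ^ n) 1
    _ ≤ 2 := by linarith [pow_le_one₀ (n := n) (norm_nonneg z) hz1]

theorem abs_inv_norm_sub_norm_le (hn : n ≠ 0) (hz : z ^ n = a * z + 1) :
    |‖z‖⁻¹ - ‖a‖| ≤ ‖z‖ ^ (n - 1) := by
  have hz0 : 0 < ‖z‖ := norm_pos_iff.mpr (by rintro rfl; simp [hn] at hz)
  have hnum : |1 - ‖a‖ * ‖z‖| ≤ ‖z‖ ^ n := by
    have := abs_norm_sub_norm_le (1 : 𝕜) (-(a * z))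
    rwa [sub_neg_eq_add, add_comm, ← hz, norm_neg, norm_mul, norm_one, norm_pow] at this
  calc |‖z‖⁻¹ - ‖a‖| = |1 - ‖a‖ * ‖z‖| / ‖z‖ := by
        rw [← abs_of_pos hz0, ← abs_div, abs_of_pos hz0]; congr 1; field_simp
    _ ≤ ‖z‖ ^ n / ‖z‖ := by gcongr
    _ = ‖z‖ ^ (n - 1) := by rw [← pow_sub_one_mul hn, mul_div_cancel_right₀ _ hz0.ne']

end NormedField

theorem exists_pow_eq_mul_add_one_abs_le {a : ℝ} (ha : 2 ≤ |a|) (n : ℕ) :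
    ∃ t : ℝ, t ^ n = a * t + 1 ∧ |t| ≤ 2 / |a| := by
  have ha0 : a ≠ 0 := abs_pos.mp (by linarith)
  set f : ℝ → ℝ := fun x => x ^ n - a * x - 1
  have hf0 : f 0 ≤ 0 := by
    simp only [f]
    linarith [pow_le_one₀ (n := n) (le_refl (0 : ℝ)) zero_le_one]
  have hf1 : 0 ≤ f (-2 / a) := by
    have hpow : |(-2 / a) ^ n| ≤ 1 := by
      rw [abs_pow]
      refine pow_le_one₀ (abs_nonneg _) ?_
      rwa [abs_div, abs_neg, abs_two, div_le_one (by positivity)]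
    have hmul : a * (-2 / a) = -2 := by field_simp
    simp only [f, hmul]
    linarith [neg_abs_le ((-2 / a) ^ n)]
  obtain ⟨t, ht, hft⟩ :=
    intermediate_value_uIcc (f := f) (by fun_prop) (Set.mem_uIcc.mpr (Or.inl ⟨hf0, hf1⟩))
  refine ⟨t, by linarith [show f t = 0 from hft], ?_⟩
  simpa [abs_div] using Set.abs_sub_left_of_mem_uIcc ht

section Trinomial

variable {n : ℕ} {a z : ℂ}

theorem monic_X_pow_sub_C_mul_X_sub_one (hn : 2 ≤ n) : (X ^ n - C a * X - 1 : ℂ[X]).Monic := by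
  rw [sub_sub]
  exact monic_X_pow_sub (by compute_degree!)

theorem coeff_zero_X_pow_sub_C_mul_X_sub_one (hn : n ≠ 0) :
    (X ^ n - C a * X - 1 : ℂ[X]).coeff 0 = -1 := by
  simp [coeff_X_pow, coeff_one, hn.symm]

theorem mem_roots_X_pow_sub_C_mul_X_sub_one_iff (hn : 2 ≤ n) :
    z ∈ (X ^ n - C a * X - 1 : ℂ[X]).roots ↔ z ^ n = a * z + 1 := by
  rw [mem_roots (monic_X_pow_sub_C_mul_X_sub_one hn).ne_zero]
  simp [sub_sub, sub_eq_zero]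

theorem X_pow_sub_C_mul_X_sub_one_eq_mul (hz : z ^ n = a * z + 1) :
    (X ^ n - C a * X - 1 : ℂ[X]) =
      (X - C z) * (∑ i ∈ Finset.range n, X ^ i * C z ^ (n - 1 - i) - C a) := by
  have hC : C z ^ n = C a * C z + 1 := by simpa using congrArg C hz
  linear_combination -(geom_sum₂_mul X (C z) n) + hC

theorem filter_roots_X_pow_sub_C_mul_X_sub_one_eq_singleton (hn : 2 ≤ n)
    (ha : 2 < ‖a‖) (hsmall : n * (2 / ‖a‖) ^ (n - 1) < ‖a‖)
    (hz : z ^ n = a * z + 1) (hzr : ‖z‖ ≤ 2 / ‖a‖) :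
    (X ^ n - C a * X - 1 : ℂ[X]).roots.filter (‖·‖ < 1) = {z} := by
  have hP := X_pow_sub_C_mul_X_sub_one_eq_mul hz
  set Q : ℂ[X] := ∑ i ∈ Finset.range n, X ^ i * C z ^ (n - 1 - i) - C a
  have hroots : (X ^ n - C a * X - 1 : ℂ[X]).roots = z ::ₘ Q.roots := by
    rw [hP, roots_mul (hP ▸ (monic_X_pow_sub_C_mul_X_sub_one hn).ne_zero), roots_X_sub_C]
    rfl
  have hQ : Q.roots.filter (‖·‖ < 1) = 0 := by
    refine Multiset.filter_eq_nil.mpr fun w hw hw1 => ?_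
    have hwP : w ^ n = a * w + 1 :=
      (mem_roots_X_pow_sub_C_mul_X_sub_one_iff hn).mp (hroots ▸ Multiset.mem_cons_of_mem hw)
    have hwr : ‖w‖ ≤ 2 / ‖a‖ :=
      (le_div_iff₀' (by linarith)).mpr (norm_mul_norm_le_two_of_pow_eq_mul_add_one hwP hw1.le)
    have hQw : ∑ i ∈ Finset.range n, w ^ i * z ^ (n - 1 - i) = a := by
      simpa [Q, eval_finsetSum, sub_eq_zero] using (mem_roots'.mp hw).2
    linarith [hQw ▸ norm_geom_sum₂_le hwr hzr n]
  have hz1 : ‖z‖ < 1 := hzr.trans_lt ((div_lt_one (by linarith)).mpr ha)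
  rw [hroots, Multiset.filter_cons_of_pos (p := (‖·‖ < 1)) _ hz1, hQ]
  rfl

theorem prod_max_norm_one_roots_X_pow_sub_C_mul_X_sub_one (hn : 2 ≤ n)
    (h : (X ^ n - C a * X - 1 : ℂ[X]).roots.filter (‖·‖ < 1) = {z}) :
    ((X ^ n - C a * X - 1 : ℂ[X]).roots.map fun w => max ‖w‖ 1).prod = ‖z‖⁻¹ := by
  have := (monic_X_pow_sub_C_mul_X_sub_one (a := a) hn).prod_max_norm_one_mul_prod_norm_lt_one
  rw [h, coeff_zero_X_pow_sub_C_mul_X_sub_one (by omega)] at this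
  exact eq_inv_of_mul_eq_one_left (by simpa using this)

end Trinomial

theorem exists_roots_filter_norm_lt_one_eq_singleton {n : ℕ} {a : ℝ} (hn : 2 ≤ n)
    (ha : 2 < |a|) (hsmall : n * (2 / |a|) ^ (n - 1) < |a|) :
    ∃ z : ℂ, ‖z‖ ≤ 2 / |a| ∧ z ^ n = a * z + 1 ∧
      (X ^ n - C (a : ℂ) * X - 1 : ℂ[X]).roots.filter (‖·‖ < 1) = {z} := by
  have hnorm : ‖(a : ℂ)‖ = |a| := by simp
  obtain ⟨t, ht, htr⟩ := exists_pow_eq_mul_add_one_abs_le ha.le n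
  have htC : (t : ℂ) ^ n = a * t + 1 := by exact_mod_cast ht
  have htr' : ‖(t : ℂ)‖ ≤ 2 / |a| := by simpa using htr
  refine ⟨t, htr', htC, ?_⟩
  rw [← hnorm] at ha hsmall htr'
  exact filter_roots_X_pow_sub_C_mul_X_sub_one_eq_singleton hn ha hsmall htC htr'

theorem big_a_case (a : ℝ) (ha : 2 < |a|) (M : ℕ → ℝ)
    (hM : ∀ n : ℕ, M n = ((Polynomial.X ^ n - Polynomial.C (a : ℂ) * Polynomial.X
      - 1).roots.map (fun z => max (‖z‖) 1)).prod) :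
    (∃ n₀ : ℕ, ∀ n : ℕ, n₀ < n →
      (((Polynomial.X ^ n - Polynomial.C (a : ℂ) * Polynomial.X - 1).roots.filter
        (fun z => ‖z‖ < 1)).card) = 1) ∧
    Tendsto M atTop (nhds |a|) := by
  set r := 2 / |a|
  have hr0 : 0 ≤ r := by positivity
  have hr1 : r < 1 := (div_lt_one (by linarith)).mpr ha
  obtain ⟨n₀, hn₀⟩ := eventually_atTop.mp <| (eventually_ge_atTop 2).and <|
    (tendsto_natCast_mul_pow_sub_one hr0 hr1).eventually_lt_const (by linarith : (0 : ℝ) < |a|)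
  choose! z hzr hz hfilter using fun n (hn : n₀ ≤ n) =>
    exists_roots_filter_norm_lt_one_eq_singleton (hn₀ n hn).1 ha (hn₀ n hn).2
  refine ⟨⟨n₀, fun n hn => by rw [hfilter n hn.le]; rfl⟩, ?_⟩
  have hdist (n : ℕ) (hn : n₀ ≤ n) : ‖M n - |a|‖ ≤ r ^ (n - 1) := by
    have hn2 := (hn₀ n hn).1
    have hbound := abs_inv_norm_sub_norm_le (by omega) (hz n hn)
    rw [Complex.norm_real, Real.norm_eq_abs] at hbound
    rw [hM n, prod_max_norm_one_roots_X_pow_sub_C_mul_X_sub_one hn2 (hfilter n hn),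
      Real.norm_eq_abs]
    exact hbound.trans (pow_le_pow_left₀ (norm_nonneg _) (hzr n hn) _)
  exact tendsto_sub_nhds_zero_iff.mp <| squeeze_zero_norm' (eventually_atTop.mpr ⟨n₀, hdist⟩)
    ((tendsto_pow_atTop_nhds_zero_of_lt_one hr0 hr1).comp (tendsto_sub_atTop_nat 1))
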